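/- Let θ ∈ ℝ, p ∈ [0,1], let v_θ = cos(θ/2) |00⟩ − i·sin(θ/2) |11⟩ ∈ ℂ² ⊗ ℂ², and let ρ = (1−p)·v_θ v_θᴴ + (p/4)·I be the output of the depolarizing channel with error probability p. Then the mixed-state stabilizer 2-Rényi entropy satisfies M̃₂(ρ) = −log₂[ 4( (p−1)⁴ cos(4θ) + 5(p−2)p((p−2)p + 2) + 7 ) ] + log₂( 3(p−2)p + 4 ) + 3. -/

import Mathlib

noncomputable section
open Matrix Kronecker

/-- The four single-qubit Pauli matrices I, X, Y, Z. -/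
def pauli : Fin 4 → Matrix (Fin 2) (Fin 2) ℂ :=
  ![1, !![0, 1; 1, 0], !![0, -Complex.I; Complex.I, 0], !![1, 0; 0, -1]]

/-- Two-qubit Pauli strings σ₁ ⊗ σ₂. -/
def pauli2 (a : Fin 4 × Fin 4) : Matrix (Fin 2 × Fin 2) (Fin 2 × Fin 2) ℂ :=
  pauli a.1 ⊗ₖ pauli a.2

/-- Rank-one density matrix v vᴴ. -/
def dm {ι : Type*} (v : ι → ℂ) : Matrix ι ι ℂ := Matrix.vecMulVec v (star v)

/-- Mixed-state stabilizer 2-Rényi entropy of a two-qubit density matrix: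
`M̃₂(ρ) = −log₂((1/4)·Σ_P |Tr(P ρ)|⁴) + log₂(Tr(ρ²))`. -/
def M2mixed (ρ : Matrix (Fin 2 × Fin 2) (Fin 2 × Fin 2) ℂ) : ℝ :=
  - Real.logb 2 ((1 / 4) * ∑ a : Fin 4 × Fin 4, ‖(pauli2 a * ρ).trace‖ ^ 4) +
    Real.logb 2 ((ρ * ρ).trace.re)

/-- The non-local-magic state cos(θ/2)|00⟩ − i sin(θ/2)|11⟩. -/
def vtheta (θ : ℝ) : Fin 2 × Fin 2 → ℂ := fun p =>
  if p = ((0 : Fin 2), (0 : Fin 2)) then (Real.cos (θ / 2) : ℂ)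
  else if p = ((1 : Fin 2), (1 : Fin 2)) then -Complex.I * (Real.sin (θ / 2) : ℂ) else 0

/-!
Depolarizing fixes `Tr ρ = 1` and scales every non-identity Pauli expectation by `1 - p`, so
`Σ_P |Tr(P ρ)|⁴ = 1 + (1 - p)⁴ (Σ_P |Tr(P ψ)|⁴ - 1)`. For `ψ = v_θ v_θᴴ` the only nonzero
expectations are `⟨II⟩ = ⟨ZZ⟩ = 1`, `⟨ZI⟩ = ⟨IZ⟩ = cos θ` and `⟨XY⟩ = ⟨YX⟩ = -sin θ`, and
`cos⁴ θ + sin⁴ θ = (3 + cos 4θ) / 4`. Since `ψ` is a projector of trace one, the purity is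
`Tr ρ² = (1 - p)² + (1 - p) p / 2 + p² / 4`.
-/

lemma cos_pow_four_add_sin_pow_four (x : ℝ) :
    Real.cos x ^ 4 + Real.sin x ^ 4 = (3 + Real.cos (4 * x)) / 4 := by
  have h2 : Real.cos (2 * x) = 2 * Real.cos x ^ 2 - 1 := Real.cos_two_mul x
  have h4 : Real.cos (4 * x) = 2 * Real.cos (2 * x) ^ 2 - 1 := by
    rw [← Real.cos_two_mul]; ring_nf
  rw [h4, h2]
  linear_combination (Real.sin x ^ 2 - Real.cos x ^ 2 + 1) * Real.sin_sq_add_cos_sq x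

section RankOne

variable {ι : Type*} [Fintype ι]

lemma trace_dm (v : ι → ℂ) : (dm v).trace = star v ⬝ᵥ v := by
  rw [dm, trace_vecMulVec, dotProduct_comm]

lemma dm_mul_self {v : ι → ℂ} (hv : (dm v).trace = 1) : dm v * dm v = dm v := by
  rw [trace_dm] at hv
  rw [dm, vecMulVec_mul_vecMulVec, hv, one_smul]

lemma trace_smul_add_smul_one_mul_self [DecidableEq ι] {σ : Matrix ι ι ℂ} (hσ : σ * σ = σ)
    (htr : σ.trace = 1) (a b : ℂ) :
    ((a • σ + b • 1) * (a • σ + b • 1)).trace = a ^ 2 + 2 * a * b + b ^ 2 * Fintype.card ι := by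
  simp only [add_mul, mul_add, smul_mul_smul, hσ, mul_one, one_mul, trace_add, trace_smul,
    htr, trace_one, smul_eq_mul]
  ring

end RankOne

lemma trace_pauli (i : Fin 4) : (pauli i).trace = if i = 0 then 2 else 0 := by
  fin_cases i <;> simp [pauli, trace, Fin.sum_univ_two]

lemma pauli2_zero : pauli2 0 = 1 := by
  simp [pauli2, pauli]

lemma trace_pauli2 (a : Fin 4 × Fin 4) : (pauli2 a).trace = if a = 0 then 4 else 0 := by
  obtain ⟨i, j⟩ := a
  rw [pauli2, trace_kronecker, trace_pauli, trace_pauli]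
  by_cases hi : i = 0 <;> by_cases hj : j = 0 <;> norm_num [hi, hj]

def depolarize (p : ℝ) (σ : Matrix (Fin 2 × Fin 2) (Fin 2 × Fin 2) ℂ) :
    Matrix (Fin 2 × Fin 2) (Fin 2 × Fin 2) ℂ :=
  ((1 - p : ℝ) : ℂ) • σ + ((p / 4 : ℝ) : ℂ) • 1

lemma trace_pauli2_mul_depolarize (a : Fin 4 × Fin 4) (p : ℝ)
    (σ : Matrix (Fin 2 × Fin 2) (Fin 2 × Fin 2) ℂ) :
    (pauli2 a * depolarize p σ).trace
      = (1 - p : ℝ) * (pauli2 a * σ).trace + if a = 0 then (p : ℂ) else 0 := by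
  rw [depolarize, mul_add, mul_smul_comm, mul_smul_comm, mul_one, trace_add, trace_smul,
    trace_smul, trace_pauli2]
  split_ifs <;> push_cast <;> ring

lemma sum_norm_trace_pauli2_mul_depolarize_pow_four
    {σ : Matrix (Fin 2 × Fin 2) (Fin 2 × Fin 2) ℂ} (htr : σ.trace = 1) (p : ℝ) :
    ∑ a, ‖(pauli2 a * depolarize p σ).trace‖ ^ 4
      = 1 + (1 - p) ^ 4 * (∑ a, ‖(pauli2 a * σ).trace‖ ^ 4 - 1) := by
  have hσ0 : ‖(pauli2 0 * σ).trace‖ ^ 4 = 1 := by rw [pauli2_zero, one_mul, htr]; simp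
  rw [← Finset.add_sum_erase _ _ (Finset.mem_univ 0),
    ← Finset.add_sum_erase _ _ (Finset.mem_univ 0), hσ0, add_sub_cancel_left, Finset.mul_sum]
  congr 1
  · rw [trace_pauli2_mul_depolarize, pauli2_zero, one_mul, htr]; simp
  · refine Finset.sum_congr rfl fun a ha => ?_
    rw [trace_pauli2_mul_depolarize, if_neg (Finset.ne_of_mem_erase ha), add_zero, norm_mul,
      Complex.norm_real, Real.norm_eq_abs, mul_pow, (by decide : Even 4).pow_abs]

lemma re_trace_depolarize_mul_self {σ : Matrix (Fin 2 × Fin 2) (Fin 2 × Fin 2) ℂ}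
    (hσ : σ * σ = σ) (htr : σ.trace = 1) (p : ℝ) :
    (depolarize p σ * depolarize p σ).trace.re = (3 * (p - 2) * p + 4) / 4 := by
  rw [depolarize, trace_smul_add_smul_one_mul_self hσ htr, Fintype.card_prod, Fintype.card_fin]
  norm_cast
  push_cast
  ring

lemma trace_pauli2_mul_dm_vtheta (θ : ℝ) (a : Fin 4 × Fin 4) :
    (pauli2 a * dm (vtheta θ)).trace =
      ((![![1, 0, 0, Real.cos θ], ![0, 0, -Real.sin θ, 0], ![0, -Real.sin θ, 0, 0],
        ![Real.cos θ, 0, 0, 1]] a.1 a.2 : ℝ) : ℂ) := by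
  have hcos : Real.cos θ = Real.cos (θ / 2) ^ 2 - Real.sin (θ / 2) ^ 2 := by
    rw [← Real.cos_two_mul']; ring_nf
  have hsin : Real.sin θ = 2 * Real.sin (θ / 2) * Real.cos (θ / 2) := by
    rw [← Real.sin_two_mul]; ring_nf
  have hone := Real.cos_sq_add_sin_sq (θ / 2)
  rw [hcos, hsin, dm]
  unfold vtheta
  -- opaque amplitudes keep `simp` from turning `↑(Real.cos x)` into `Complex.cos ↑x`
  generalize Real.cos (θ / 2) = c, Real.sin (θ / 2) = s at hone ⊢
  obtain ⟨i, j⟩ := a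
  fin_cases i <;> fin_cases j <;>
    simp [pauli2, pauli, trace, mul_apply, vecMulVec_apply, Fintype.sum_prod_type,
      Complex.ext_iff, sq] <;>
    first | ring1 | linear_combination hone

lemma trace_dm_vtheta (θ : ℝ) : (dm (vtheta θ)).trace = 1 := by
  simpa [pauli2_zero] using trace_pauli2_mul_dm_vtheta θ 0

lemma sum_norm_trace_pauli2_mul_dm_vtheta_pow_four (θ : ℝ) :
    ∑ a, ‖(pauli2 a * dm (vtheta θ)).trace‖ ^ 4
      = 2 + 2 * Real.cos θ ^ 4 + 2 * Real.sin θ ^ 4 := by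
  simp only [trace_pauli2_mul_dm_vtheta, Complex.norm_real, Real.norm_eq_abs,
    (by decide : Even 4).pow_abs, Fintype.sum_prod_type, Fin.sum_univ_four, cons_val_zero,
    cons_val_one, cons_val, one_pow, ne_eq, OfNat.ofNat_ne_zero,
    not_false_eq_true, zero_pow, add_zero, zero_add]
  ring

theorem stabilizer_entropy_depolarized_nlm_state_general
    (θ : ℝ) (p : ℝ)
    (ρ : Matrix (Fin 2 × Fin 2) (Fin 2 × Fin 2) ℂ)
    (hρ : ρ = ((1 - p : ℝ) : ℂ) • dm (vtheta θ) +
      ((p / 4 : ℝ) : ℂ) • (1 : Matrix (Fin 2 × Fin 2) (Fin 2 × Fin 2) ℂ)) :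
    M2mixed ρ =
      - Real.logb 2
          (4 * ((p - 1) ^ 4 * Real.cos (4 * θ) + 5 * (p - 2) * p * ((p - 2) * p + 2) + 7)) +
        Real.logb 2 (3 * (p - 2) * p + 4) + 3 := by
  replace hρ : ρ = depolarize p (dm (vtheta θ)) := hρ
  have hψ := trace_dm_vtheta θ
  have hpurity : (ρ * ρ).trace.re = (3 * (p - 2) * p + 4) / 2 ^ 2 := by
    rw [hρ, re_trace_depolarize_mul_self (dm_mul_self hψ) hψ]; norm_num
  set E := (p - 1) ^ 4 * Real.cos (4 * θ) + 5 * (p - 2) * p * ((p - 2) * p + 2) + 7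
  set D := 3 * (p - 2) * p + 4
  have hstab : (1 / 4) * ∑ a, ‖(pauli2 a * ρ).trace‖ ^ 4 = 2 ^ 2 * E / 2 ^ 5 := by
    rw [hρ, sum_norm_trace_pauli2_mul_depolarize_pow_four hψ,
      sum_norm_trace_pauli2_mul_dm_vtheta_pow_four]
    linear_combination (1 - p) ^ 4 / 2 * cos_pow_four_add_sin_pow_four θ
  have hE : 0 < E := by
    nlinarith [Real.neg_one_le_cos (4 * θ), pow_nonneg (sq_nonneg (p - 1)) 2]
  have hD : 0 < D := by nlinarith [sq_nonneg (p - 1)]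
  have hlog (k : ℕ) : Real.logb 2 (2 ^ k) = k := by simp [Real.logb_pow]
  rw [M2mixed, hstab, hpurity, Real.logb_div (by positivity) (by norm_num),
    Real.logb_div hD.ne' (by norm_num), hlog, hlog]
  norm_num
  ring

theorem stabilizer_entropy_depolarized_nlm_state
    (θ : ℝ) (p : ℝ) (hp : p ∈ Set.Icc (0 : ℝ) 1)
    (ρ : Matrix (Fin 2 × Fin 2) (Fin 2 × Fin 2) ℂ)
    (hρ : ρ = ((1 - p : ℝ) : ℂ) • dm (vtheta θ) +
      ((p / 4 : ℝ) : ℂ) • (1 : Matrix (Fin 2 × Fin 2) (Fin 2 × Fin 2) ℂ)) :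
    M2mixed ρ =
      - Real.logb 2
          (4 * ((p - 1) ^ 4 * Real.cos (4 * θ) + 5 * (p - 2) * p * ((p - 2) * p + 2) + 7)) +
        Real.logb 2 (3 * (p - 2) * p + 4) + 3 :=
  stabilizer_entropy_depolarized_nlm_state_general θ p ρ hρ
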